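/- arXiv:2012.03222 — 5 statements merged into one kernel-verified Lean document; each statement's English description precedes it below -/
import Mathlib

section
/- Let α ≠ 0 be a real number and let θ, a, b : (0, ε₀) → ℝ be functions with a(ε) > 0 such that, as ε → 0+, one has θ(ε)·ε → +∞, a(ε)/θ(ε) → 0, and θ(ε)·a(ε)·ε² → 0. Then, as ε → 0+, ∑_{i ∈ ℤ : a(ε)i + b(ε) ≥ θ(ε)} [(a(ε)i + b(ε))ε]^{2/α − 1} · exp(−[(a(ε)i + b(ε))ε]²/2) is asymptotically equivalent to (1/(a(ε)ε)) · (θ(ε)ε)^{2/α − 2} · exp(−(θ(ε)ε)²/2), i.e. the ratio of the two expressions tends to 1. -/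
open Filter Topology Real Set
open MeasureTheory

noncomputable def fc (c x : ℝ) : ℝ := x ^ c * Real.exp (-x ^ 2 / 2)

lemma fc_nonneg (c : ℝ) {x : ℝ} (hx : 0 ≤ x) : 0 ≤ fc c x :=
  mul_nonneg (Real.rpow_nonneg hx c) (Real.exp_pos _).le

lemma fc_pos (c : ℝ) {x : ℝ} (hx : 0 < x) : 0 < fc c x :=
  mul_pos (Real.rpow_pos_of_pos hx c) (Real.exp_pos _)

lemma fc_le (c : ℝ) : ∀ᶠ x in atTop, fc c x ≤ Real.exp (-(1/4) * x) := by
  have h := tendsto_rpow_mul_exp_neg_mul_atTop_nhds_zero c (1/4) (by norm_num)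
  filter_upwards [h.eventually_le_const (by norm_num : (0:ℝ) < 1) |>.and
    (eventually_ge_atTop (1:ℝ))] with x hx
  obtain ⟨h1, h2⟩ := hx
  have : fc c x ≤ (x ^ c * Real.exp (-(1/4) * x)) * Real.exp (-(1/4) * x) := by
    rw [fc, mul_assoc, ← Real.exp_add]
    apply mul_le_mul_of_nonneg_left _ (Real.rpow_nonneg (by linarith) c)
    apply Real.exp_le_exp.2
    nlinarith
  calc fc c x ≤ _ := this
    _ ≤ 1 * Real.exp (-(1/4)*x) := by
        exact mul_le_mul_of_nonneg_right h1 (Real.exp_pos _).le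
    _ = _ := one_mul _

lemma fc_tendsto (c : ℝ) : Tendsto (fc c) atTop (𝓝 0) := by
  have h2 : Tendsto (fun x : ℝ => Real.exp (-(1/4) * x)) atTop (𝓝 0) := by
    apply Real.tendsto_exp_atBot.comp
    have : Tendsto (fun x : ℝ => -(1/4) * x) atTop atBot := by
      exact tendsto_id.const_mul_atTop_of_neg (by norm_num)
    exact this
  apply squeeze_zero' (g := fun x => Real.exp (-(1/4) * x))
  · filter_upwards [eventually_ge_atTop (0:ℝ)] with x hx using fc_nonneg c hx
  · exact fc_le c
  · exact h2

lemma fc_meas (c : ℝ) : Measurable (fc c) := by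
  unfold fc; measurability

lemma fc_hasDeriv {x : ℝ} (hx : 0 < x) (c : ℝ) :
    HasDerivAt (fc c) ((c - x ^ 2) * (x ^ (c - 1) * Real.exp (-x ^ 2 / 2))) x := by
  have h1 : HasDerivAt (fun x : ℝ => x ^ c) (c * x ^ (c - 1)) x :=
    Real.hasDerivAt_rpow_const (Or.inl hx.ne')
  have h2 : HasDerivAt (fun x : ℝ => Real.exp (-x ^ 2 / 2)) (-x * Real.exp (-x ^ 2 / 2)) x := by
    have h3 : HasDerivAt (fun x : ℝ => -x ^ 2 / 2) (-x) x := by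
      have := ((hasDerivAt_pow 2 x).neg).div_const 2
      refine this.congr_deriv ?_
      simp; ring
    simpa [mul_comm] using h3.exp
  have h := h1.mul h2
  refine h.congr_deriv ?_
  have hxc : x ^ c = x ^ (c-1) * x := by
    rw [← Real.rpow_add_one hx.ne']; ring_nf
  rw [hxc]; ring

lemma fc_anti (c : ℝ) {T : ℝ} (h1 : 1 ≤ T) (hc : c ≤ T) : AntitoneOn (fc c) (Ici T) := by
  have hT : (0:ℝ) < T := lt_of_lt_of_le one_pos h1
  have hdiff : ∀ x ∈ interior (Ici T), HasDerivAt (fc c) ((c - x ^ 2) * (x ^ (c - 1) * Real.exp (-x ^ 2 / 2))) x := by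
    intro x hx
    rw [interior_Ici] at hx
    exact fc_hasDeriv (hT.trans hx) c
  apply antitoneOn_of_deriv_nonpos (convex_Ici T)
  · intro x hx
    exact ((fc_hasDeriv (lt_of_lt_of_le hT hx) c).continuousAt.continuousWithinAt)
  · intro x hx
    exact (hdiff x hx).differentiableAt.differentiableWithinAt
  · intro x hx
    have hd := hdiff x hx
    rw [interior_Ici] at hx
    have hx0 : 0 < x := hT.trans hx
    rw [hd.deriv]
    apply mul_nonpos_of_nonpos_of_nonneg
    · nlinarith [(show T < x from hx).le]
    · exact mul_nonneg (Real.rpow_nonneg hx0.le _) (Real.exp_pos _).le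

lemma fc_T (c : ℝ) : ∃ T : ℝ, 1 ≤ T ∧ AntitoneOn (fc c) (Ici T) ∧
    ∀ t, T ≤ t → IntegrableOn (fc c) (Ioi t) := by
  obtain ⟨T₀, hT₀⟩ := eventually_atTop.1 (fc_le c)
  refine ⟨max (max 1 c) T₀, le_trans (le_max_left 1 c) (le_max_left _ _), ?_, ?_⟩
  · exact (fc_anti c (le_max_left 1 c) (le_max_right 1 c)).mono
      (Ici_subset_Ici.2 (le_max_left _ _))
  · intro t ht
    refine Integrable.mono' (g := fun x => Real.exp (-(1/4) * x))
      (exp_neg_integrableOn_Ioi t (by norm_num : (0:ℝ) < 1/4))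
      ((fc_meas c).aestronglyMeasurable) ?_
    filter_upwards [ae_restrict_mem measurableSet_Ioi] with x hx
    have hx1 : (1:ℝ) ≤ x :=
      le_trans (le_trans (le_max_left 1 c) (le_trans (le_max_left _ _) ht)) hx.le
    rw [Real.norm_eq_abs, abs_of_nonneg (fc_nonneg c (by linarith))]
    exact hT₀ x (le_trans (le_trans (le_max_right _ _) ht) hx.le)

lemma fc_deriv_F {x : ℝ} (hx : 0 < x) (c : ℝ) :
    HasDerivAt (fun y => -(fc (c-1) y)) (fc c x - (c-1) * fc (c-2) x) x := by
  have h := (fc_hasDeriv hx (c-1)).neg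
  rw [show (c - 1 - 1 : ℝ) = c - 2 by ring] at h
  refine h.congr_deriv ?_
  have h1 : x ^ c = x ^ (c-2) * x ^ 2 := by
    rw [← Real.rpow_natCast x 2, ← Real.rpow_add hx]; norm_num
  unfold fc
  rw [h1]
  ring

lemma fc_ftc (c : ℝ) {t : ℝ} (ht : 0 < t)
    (h1 : IntegrableOn (fc c) (Ioi t)) (h2 : IntegrableOn (fc (c-2)) (Ioi t)) :
    t ^ (c-1) * Real.exp (-t^2/2)
      = (∫ x in Ioi t, fc c x) - (c-1) * ∫ x in Ioi t, fc (c-2) x := by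
  have key : ∫ x in Ioi t, (fc c x - (c-1) * fc (c-2) x)
      = 0 - (-(fc (c-1) t)) := by
    apply integral_Ioi_of_hasDerivAt_of_tendsto'
    · intro x hx
      exact fc_deriv_F (lt_of_lt_of_le ht hx) c
    · exact h1.sub (h2.const_mul _)
    · simpa using (fc_tendsto (c-1)).neg
  rw [integral_sub h1 (h2.const_mul _), integral_const_mul] at key
  have : fc (c-1) t = t ^ (c-1) * Real.exp (-t^2/2) := rfl
  linarith [key]

lemma fc_split {x : ℝ} (hx : 0 < x) (c : ℝ) : fc c x = x ^ 2 * fc (c-2) x := by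
  unfold fc
  rw [show x ^ c = x ^ (c-2) * x ^ 2 by
    rw [← Real.rpow_natCast x 2, ← Real.rpow_add hx]; norm_num]
  ring

lemma fc_Jpos (c : ℝ) {t : ℝ} (ht : 0 < t) (hint : IntegrableOn (fc c) (Ioi t)) :
    0 < ∫ x in Ioi t, fc c x := by
  have hf : 0 ≤ᶠ[ae (volume.restrict (Ioi t))] fc c := by
    filter_upwards [ae_restrict_mem measurableSet_Ioi] with x hx
    exact fc_nonneg c (ht.trans hx).le
  rw [setIntegral_pos_iff_support_of_nonneg_ae hf hint]
  have hsub : Ioi t ⊆ Function.support (fc c) ∩ Ioi t := fun x hx =>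
    ⟨(fc_pos c (ht.trans hx)).ne', hx⟩
  have h1 : volume (Ioi t) ≤ volume (Function.support (fc c) ∩ Ioi t) := measure_mono hsub
  rw [Real.volume_Ioi] at h1
  exact lt_of_lt_of_le (by simp) h1

lemma fc_tail (c : ℝ) :
    Tendsto (fun t => (∫ x in Ioi t, fc c x) / (t ^ (c-1) * Real.exp (-t^2/2)))
      atTop (𝓝 1) := by
  obtain ⟨T₁, hT₁1, _, hT₁int⟩ := fc_T c
  obtain ⟨T₂, hT₂1, _, hT₂int⟩ := fc_T (c-2)
  have key : ∀ᶠ t in atTop,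
      |t ^ (c-1) * Real.exp (-t^2/2) / (∫ x in Ioi t, fc c x) - 1| ≤ |c-1| / t^2 := by
    filter_upwards [eventually_ge_atTop T₁, eventually_ge_atTop T₂,
      eventually_ge_atTop (1:ℝ)] with t h1 h2 h3
    have ht0 : (0:ℝ) < t := lt_of_lt_of_le one_pos h3
    have int1 := hT₁int t h1
    have int2 := hT₂int t h2
    set J := ∫ x in Ioi t, fc c x with hJ
    set K := ∫ x in Ioi t, fc (c-2) x with hK
    have hJpos : 0 < J := fc_Jpos c ht0 int1
    have hKnn : 0 ≤ K :=
      setIntegral_nonneg measurableSet_Ioi (fun x hx => fc_nonneg _ (ht0.trans hx).le)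
    have hFTC : t ^ (c-1) * Real.exp (-t^2/2) = J - (c-1) * K := fc_ftc c ht0 int1 int2
    have htK : t ^ 2 * K ≤ J := by
      rw [hK, ← integral_const_mul]
      apply setIntegral_mono_on (int2.const_mul _) int1 measurableSet_Ioi
      intro x hx
      rw [fc_split (ht0.trans hx) c]
      have : t ^ 2 ≤ x ^ 2 := by nlinarith [(show t < x from hx).le]
      exact mul_le_mul_of_nonneg_right this (fc_nonneg _ (ht0.trans hx).le)
    rw [hFTC]
    have : (J - (c-1) * K) / J - 1 = -((c-1) * K / J) := by
      field_simp
      ring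
    rw [this, abs_neg, abs_div, abs_of_pos hJpos, abs_mul, abs_of_nonneg hKnn]
    rw [div_le_div_iff₀ hJpos (by positivity)]
    have ht2 : (0:ℝ) < t ^ 2 := by positivity
    nlinarith [abs_nonneg (c-1), mul_le_mul_of_nonneg_left htK (abs_nonneg (c-1))]
  have hb : Tendsto (fun t : ℝ => |c-1| / t^2) atTop (𝓝 0) :=
    Tendsto.div_atTop tendsto_const_nhds (tendsto_pow_atTop (by norm_num))
  have hIJ : Tendsto (fun t => t ^ (c-1) * Real.exp (-t^2/2) / (∫ x in Ioi t, fc c x))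
      atTop (𝓝 1) := by
    have h1 : Tendsto (fun t : ℝ => 1 - |c-1| / t^2) atTop (𝓝 1) := by
      simpa using tendsto_const_nhds.sub hb
    have h2 : Tendsto (fun t : ℝ => 1 + |c-1| / t^2) atTop (𝓝 1) := by
      simpa using tendsto_const_nhds.add hb
    apply tendsto_of_tendsto_of_tendsto_of_le_of_le' h1 h2
    · filter_upwards [key] with t ht
      have := abs_le.1 ht
      linarith [this.1]
    · filter_upwards [key] with t ht
      have := abs_le.1 ht
      linarith [this.2]
  have := hIJ.inv₀ one_ne_zero
  rw [inv_one] at this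
  exact this.congr (fun t => inv_div _ _)

lemma sum_int (c : ℝ) {T t h x₀ : ℝ} (hanti : AntitoneOn (fc c) (Ici T))
    (hint : ∀ s, T ≤ s → IntegrableOn (fc c) (Ioi s))
    (hT1 : 1 ≤ T) (hTt : T ≤ t) (hh : 0 < h) (htx : t ≤ x₀) (hxth : x₀ ≤ t + h) :
    Summable (fun k : ℕ => fc c (x₀ + k * h)) ∧
      |(∑' k : ℕ, fc c (x₀ + k * h)) - h⁻¹ * ∫ x in Ioi t, fc c x| ≤ fc c t := by
  have ht0 : (0:ℝ) < t := lt_of_lt_of_le (lt_of_lt_of_le one_pos hT1) hTt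
  have hTx : T ≤ x₀ := hTt.trans htx
  have hx0 : (0:ℝ) < x₀ := ht0.trans_le htx
  set s : ℕ → Set ℝ := fun k => Ioc (x₀ + k * h) (x₀ + (k+1) * h) with hs
  have hmem : ∀ k : ℕ, ∀ x ∈ s k, x₀ + (k:ℝ) * h ≤ x ∧ x ≤ x₀ + ((k:ℝ)+1) * h := by
    intro k x hx
    exact ⟨hx.1.le, hx.2⟩
  have hptT : ∀ k : ℕ, T ≤ x₀ + (k:ℝ) * h := by
    intro k
    have : (0:ℝ) ≤ (k:ℝ) * h := mul_nonneg (Nat.cast_nonneg k) hh.le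
    linarith
  have hunion : (⋃ k, s k) = Ioi x₀ := by
    ext x
    simp only [hs, mem_iUnion, mem_Ioc, mem_Ioi]
    constructor
    · rintro ⟨k, h1, h2⟩
      have : (0:ℝ) ≤ (k:ℝ) * h := mul_nonneg (Nat.cast_nonneg k) hh.le
      linarith
    · intro hx
      set r := (x - x₀) / h with hr
      have hrpos : 0 < r := div_pos (by linarith) hh
      set m := ⌈r⌉₊ with hm
      have hm1 : 1 ≤ m := Nat.one_le_iff_ne_zero.2 (by positivity)
      refine ⟨m - 1, ?_, ?_⟩
      · have h1 : (m:ℝ) < r + 1 := Nat.ceil_lt_add_one hrpos.le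
        have hc : ((m - 1 : ℕ) : ℝ) = (m:ℝ) - 1 := by
          push_cast [Nat.cast_sub hm1]; ring
        rw [hc]
        have : ((m:ℝ) - 1) * h < x - x₀ := by
          rw [hr] at h1
          calc ((m:ℝ) - 1) * h < ((x - x₀)/h) * h := by
                apply mul_lt_mul_of_pos_right _ hh
                linarith
            _ = x - x₀ := by field_simp
        linarith
      · have h2 : r ≤ (m:ℝ) := Nat.le_ceil r
        have hc : ((m - 1 : ℕ) : ℝ) + 1 = (m:ℝ) := by
          push_cast [Nat.cast_sub hm1]; ring
        rw [hc]
        have : x - x₀ ≤ (m:ℝ) * h := by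
          rw [hr] at h2
          calc x - x₀ = ((x - x₀)/h) * h := by field_simp
            _ ≤ (m:ℝ) * h := mul_le_mul_of_nonneg_right h2 hh.le
        linarith
  have hd : Pairwise (Function.onFun Disjoint s) := by
    rw [pairwise_disjoint_on]
    intro i j hij
    rw [hs]
    apply Set.Ioc_disjoint_Ioc.2
    have hij1 : (i:ℝ) + 1 ≤ (j:ℝ) := by exact_mod_cast hij
    refine le_trans (min_le_left _ _) (le_trans ?_ (le_max_right _ _))
    have : ((i:ℝ)+1) * h ≤ (j:ℝ) * h := mul_le_mul_of_nonneg_right hij1 hh.le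
    linarith
  have hintx : IntegrableOn (fc c) (Ioi x₀) := hint x₀ hTx
  have hmeas : ∀ k, MeasurableSet (s k) := fun k => measurableSet_Ioc
  have hsum0 : HasSum (fun k => ∫ x in s k, fc c x) (∫ x in Ioi x₀, fc c x) := by
    have := hasSum_integral_iUnion hmeas hd (by rw [hunion]; exact hintx)
    rwa [hunion] at this
  have hsk_sub : ∀ k, s k ⊆ Ioi x₀ := by
    intro k x hx
    have h1 := (hmem k x hx).1
    have : (0:ℝ) ≤ (k:ℝ) * h := mul_nonneg (Nat.cast_nonneg k) hh.le
    exact mem_Ioi.2 (lt_of_le_of_lt (by linarith) hx.1)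
  have hvol : ∀ k, (volume (s k)).toReal = h := by
    intro k
    rw [hs]
    simp only [Real.volume_Ioc]
    rw [show x₀ + ((k:ℝ)+1) * h - (x₀ + (k:ℝ) * h) = h by ring]
    exact ENNReal.toReal_ofReal hh.le
  have hconst_int : ∀ k (C : ℝ), IntegrableOn (fun _ => C) (s k) := by
    intro k C
    apply integrableOn_const (measure_Ioc_lt_top).ne
  have hupper : ∀ k : ℕ, ∫ x in s k, fc c x ≤ h * fc c (x₀ + k * h) := by
    intro k
    have hb : ∀ x ∈ s k, fc c x ≤ fc c (x₀ + k * h) := by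
      intro x hx
      exact hanti (mem_Ici.2 (hptT k)) (mem_Ici.2 ((hptT k).trans (hmem k x hx).1))
        (hmem k x hx).1
    calc ∫ x in s k, fc c x ≤ ∫ _x in s k, fc c (x₀ + k * h) :=
          setIntegral_mono_on (hintx.mono_set (hsk_sub k)) (hconst_int k _) (hmeas k) hb
      _ = h * fc c (x₀ + k * h) := by
          rw [setIntegral_const, smul_eq_mul, measureReal_def, hvol k]
  have hlower : ∀ k : ℕ, h * fc c (x₀ + ((k:ℝ)+1) * h) ≤ ∫ x in s k, fc c x := by
    intro k
    have hb : ∀ x ∈ s k, fc c (x₀ + ((k:ℝ)+1) * h) ≤ fc c x := by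
      intro x hx
      exact hanti (mem_Ici.2 ((hptT k).trans (hmem k x hx).1)) (mem_Ici.2 (by
        have := hptT (k+1)
        push_cast at this
        linarith)) (hmem k x hx).2
    calc h * fc c (x₀ + ((k:ℝ)+1) * h) = ∫ _x in s k, fc c (x₀ + ((k:ℝ)+1) * h) := by
          rw [setIntegral_const, smul_eq_mul, measureReal_def, hvol k]
      _ ≤ ∫ x in s k, fc c x :=
          setIntegral_mono_on (hconst_int k _) (hintx.mono_set (hsk_sub k)) (hmeas k) hb
  have hsummInt : Summable (fun k => ∫ x in s k, fc c x) := hsum0.summable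
  have hxk_nn : ∀ k : ℕ, (0:ℝ) ≤ x₀ + ((k:ℝ)+1) * h := by
    intro k
    have : (0:ℝ) ≤ ((k:ℝ)+1) * h := mul_nonneg (by positivity) hh.le
    linarith
  have hxk_nn' : ∀ k : ℕ, (0:ℝ) ≤ x₀ + (k:ℝ) * h := by
    intro k
    have : (0:ℝ) ≤ (k:ℝ) * h := mul_nonneg (Nat.cast_nonneg k) hh.le
    linarith
  have hsum1 : Summable (fun k : ℕ => fc c (x₀ + ((k:ℝ)+1) * h)) := by
    apply Summable.of_nonneg_of_le (fun k => fc_nonneg c (hxk_nn k)) (fun k => ?_)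
      (hsummInt.mul_left h⁻¹)
    rw [inv_mul_eq_div, le_div_iff₀ hh, mul_comm]
    exact hlower k
  have hsumF : Summable (fun k : ℕ => fc c (x₀ + (k:ℝ) * h)) := by
    apply (summable_nat_add_iff 1).1
    refine hsum1.congr (fun k => ?_)
    rw [Nat.cast_succ]
  refine ⟨hsumF, ?_⟩
  set S := ∑' k : ℕ, fc c (x₀ + (k:ℝ) * h) with hS
  have htsumInt : ∑' k, ∫ x in s k, fc c x = ∫ x in Ioi x₀, fc c x := hsum0.tsum_eq
  -- upper bound on S
  have hS_eq : S = fc c x₀ + ∑' k : ℕ, fc c (x₀ + ((k:ℝ)+1) * h) := by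
    rw [hS, hsumF.tsum_eq_zero_add]
    congr 1
    · norm_num
    · apply tsum_congr
      intro k
      push_cast
      ring_nf
  have hupS : S ≤ fc c x₀ + h⁻¹ * ∫ x in Ioi x₀, fc c x := by
    rw [hS_eq]
    have h1 : ∑' k : ℕ, fc c (x₀ + ((k:ℝ)+1) * h) ≤ ∑' k, h⁻¹ * ∫ x in s k, fc c x := by
      apply Summable.tsum_le_tsum _ hsum1 (hsummInt.mul_left h⁻¹)
      intro k
      rw [inv_mul_eq_div, le_div_iff₀ hh, mul_comm]
      exact hlower k
    rw [tsum_mul_left, htsumInt] at h1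
    linarith
  have hloS : h⁻¹ * (∫ x in Ioi x₀, fc c x) ≤ S := by
    have h1 : ∑' k, h⁻¹ * ∫ x in s k, fc c x ≤ S := by
      apply Summable.tsum_le_tsum _ (hsummInt.mul_left h⁻¹) hsumF
      intro k
      rw [inv_mul_eq_div, div_le_iff₀ hh, mul_comm]
      exact hupper k
    rwa [tsum_mul_left, htsumInt] at h1
  -- compare Ioi t with Ioi x₀
  have hsplit : ∫ x in Ioi t, fc c x = (∫ x in Ioc t x₀, fc c x) + ∫ x in Ioi x₀, fc c x := by
    rw [← setIntegral_union (Ioc_disjoint_Ioi le_rfl) measurableSet_Ioi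
      ((hint t hTt).mono_set Ioc_subset_Ioi_self) hintx, Ioc_union_Ioi_eq_Ioi htx]
  have hIoc_nn : 0 ≤ ∫ x in Ioc t x₀, fc c x :=
    setIntegral_nonneg measurableSet_Ioc (fun x hx => fc_nonneg c (ht0.trans hx.1).le)
  have hIoc_le : ∫ x in Ioc t x₀, fc c x ≤ h * fc c t := by
    have hb : ∀ x ∈ Ioc t x₀, fc c x ≤ fc c t := by
      intro x hx
      exact hanti (mem_Ici.2 hTt) (mem_Ici.2 (hTt.trans hx.1.le)) hx.1.le
    have hconst : IntegrableOn (fun _ => fc c t) (Ioc t x₀) :=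
      integrableOn_const (measure_Ioc_lt_top).ne
    calc ∫ x in Ioc t x₀, fc c x ≤ ∫ _x in Ioc t x₀, fc c t :=
          setIntegral_mono_on ((hint t hTt).mono_set Ioc_subset_Ioi_self) hconst
            measurableSet_Ioc hb
      _ = (x₀ - t) * fc c t := by
          rw [setIntegral_const, smul_eq_mul, measureReal_def, Real.volume_Ioc,
            ENNReal.toReal_ofReal (by linarith)]
      _ ≤ h * fc c t := by
          apply mul_le_mul_of_nonneg_right (by linarith) (fc_nonneg c ht0.le)
  have hfx0t : fc c x₀ ≤ fc c t := hanti (mem_Ici.2 hTt) (mem_Ici.2 hTx) htx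
  have hinv : h⁻¹ * h = 1 := inv_mul_cancel₀ hh.ne'
  have hinv_nn : (0:ℝ) ≤ h⁻¹ := by positivity
  rw [abs_le]
  constructor
  · -- h⁻¹ ∫ Ioi t ≤ S + fc c t
    have : h⁻¹ * (∫ x in Ioi t, fc c x) ≤ h⁻¹ * ((h * fc c t) + ∫ x in Ioi x₀, fc c x) := by
      apply mul_le_mul_of_nonneg_left _ hinv_nn
      rw [hsplit]
      linarith
    nlinarith
  · -- S - h⁻¹ ∫ Ioi t ≤ fc c t
    have h2 : h⁻¹ * (∫ x in Ioi x₀, fc c x) ≤ h⁻¹ * ∫ x in Ioi t, fc c x := by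
      apply mul_le_mul_of_nonneg_left _ hinv_nn
      rw [hsplit]
      linarith
    linarith


/-- Lemma 3 of the paper: if `θ(ε)ε → ∞`, `a/θ → 0`, `θaε² → 0` with
`a > 0` on `(0, ε₀)`, then
`∑_{i : aᵢ := a(ε)i + b(ε) ≥ θ(ε)} (aᵢ ε)^{2/α−1} e^{−(aᵢ ε)²/2}
  ∼ (a(ε)ε)⁻¹ (θ(ε)ε)^{2/α−2} e^{−(θ(ε)ε)²/2}` as `ε → 0+`. -/
theorem stmt_5 (α : ℝ) (hα : α ≠ 0) (ε₀ : ℝ) (hε₀ : 0 < ε₀)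
    (θ a b : ℝ → ℝ) (ha_pos : ∀ ε ∈ Set.Ioo (0:ℝ) ε₀, 0 < a ε)
    (hθ : Tendsto (fun ε => θ ε * ε) (𝓝[>] (0:ℝ)) atTop)
    (haθ : Tendsto (fun ε => a ε / θ ε) (𝓝[>] (0:ℝ)) (𝓝 0))
    (hθa : Tendsto (fun ε => θ ε * a ε * ε ^ 2) (𝓝[>] (0:ℝ)) (𝓝 0)) :
    Tendsto
      (fun ε =>
        (∑' i : {i : ℤ // θ ε ≤ a ε * (i : ℝ) + b ε},
            ((a ε * ((i : ℤ) : ℝ) + b ε) * ε) ^ (2 / α - 1)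
              * Real.exp (-((a ε * ((i : ℤ) : ℝ) + b ε) * ε) ^ 2 / 2))
          / ((a ε * ε)⁻¹ * (θ ε * ε) ^ (2 / α - 2) * Real.exp (-(θ ε * ε) ^ 2 / 2)))
      (𝓝[>] (0:ℝ)) (𝓝 1) := by
  set c : ℝ := 2 / α - 1 with hc
  have hc2 : 2 / α - 2 = c - 1 := by rw [hc]; ring
  obtain ⟨T, hT1, hanti, hint⟩ := fc_T c
  set R : ℝ → ℝ := fun ε =>
    (∫ x in Ioi (θ ε * ε), fc c x) / ((θ ε * ε) ^ (c-1) * Real.exp (-(θ ε * ε)^2/2)) with hR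
  have hRt : Tendsto R (𝓝[>] (0:ℝ)) (𝓝 1) := (fc_tail c).comp hθ
  set BIG : ℝ → ℝ := fun ε =>
        (∑' i : {i : ℤ // θ ε ≤ a ε * (i : ℝ) + b ε},
            ((a ε * ((i : ℤ) : ℝ) + b ε) * ε) ^ c
              * Real.exp (-((a ε * ((i : ℤ) : ℝ) + b ε) * ε) ^ 2 / 2))
          / ((a ε * ε)⁻¹ * (θ ε * ε) ^ (2 / α - 2) * Real.exp (-(θ ε * ε) ^ 2 / 2)) with hBIG
  have key : ∀ᶠ ε in 𝓝[>] (0:ℝ), |BIG ε - R ε| ≤ θ ε * a ε * ε ^ 2 := by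
    filter_upwards [Ioo_mem_nhdsGT_of_mem (Set.mem_Ico.2 ⟨le_refl (0:ℝ), hε₀⟩),
      hθ.eventually_ge_atTop T] with ε hεI htT
    have hε : (0:ℝ) < ε := hεI.1
    have ha : 0 < a ε := ha_pos ε hεI
    set t : ℝ := θ ε * ε with htdef
    set h : ℝ := a ε * ε with hhdef
    have hh : 0 < h := mul_pos ha hε
    have ht0 : (0:ℝ) < t := lt_of_lt_of_le (lt_of_lt_of_le one_pos hT1) htT
    have hθ0 : 0 < θ ε := by
      by_contra hcon
      push_neg at hcon
      nlinarith
    set i₀ : ℤ := ⌈(θ ε - b ε) / a ε⌉ with hi₀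
    have hmem : ∀ i : ℤ, (θ ε ≤ a ε * (i:ℝ) + b ε) ↔ i₀ ≤ i := by
      intro i
      rw [hi₀, Int.ceil_le, div_le_iff₀ ha]
      constructor <;> intro h' <;> nlinarith [h']
    set x₀ : ℝ := (a ε * (i₀:ℝ) + b ε) * ε with hx₀def
    have hx₀_ge : t ≤ x₀ := by
      have h1 : θ ε ≤ a ε * (i₀:ℝ) + b ε := (hmem i₀).2 le_rfl
      rw [htdef, hx₀def]
      exact mul_le_mul_of_nonneg_right h1 hε.le
    have hx₀_le : x₀ ≤ t + h := by
      have h1 : (i₀:ℝ) < (θ ε - b ε) / a ε + 1 := Int.ceil_lt_add_one _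
      have h2 : a ε * (i₀:ℝ) + b ε ≤ θ ε + a ε := by
        rw [div_add' _ _ _ ha.ne', lt_div_iff₀ ha] at h1
        nlinarith
      rw [htdef, hhdef, hx₀def]
      calc (a ε * (i₀:ℝ) + b ε) * ε ≤ (θ ε + a ε) * ε :=
            mul_le_mul_of_nonneg_right h2 hε.le
        _ = θ ε * ε + a ε * ε := by ring
    obtain ⟨hsumm, hest⟩ := sum_int c hanti hint hT1 htT hh hx₀_ge hx₀_le
    -- identify the tsum
    have he1 : ∀ k : ℕ, θ ε ≤ a ε * ((i₀ + (k:ℤ) : ℤ) : ℝ) + b ε := fun k =>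
      (hmem (i₀ + k)).2 (by omega)
    let e : ℕ ≃ {i : ℤ // θ ε ≤ a ε * (i : ℝ) + b ε} :=
      { toFun := fun k => ⟨i₀ + (k:ℤ), he1 k⟩
        invFun := fun i => (i.1 - i₀).toNat
        left_inv := fun k => by simp
        right_inv := fun i => by
          apply Subtype.ext
          have : i₀ ≤ i.1 := (hmem i.1).1 i.2
          simp only
          omega }
    have hsum_eq : (∑' i : {i : ℤ // θ ε ≤ a ε * (i : ℝ) + b ε},
        ((a ε * ((i : ℤ) : ℝ) + b ε) * ε) ^ c
          * Real.exp (-((a ε * ((i : ℤ) : ℝ) + b ε) * ε) ^ 2 / 2))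
        = ∑' k : ℕ, fc c (x₀ + (k:ℝ) * h) := by
      rw [← Equiv.tsum_eq e]
      apply tsum_congr
      intro k
      have hxk : (a ε * ((i₀ + (k:ℤ) : ℤ) : ℝ) + b ε) * ε = x₀ + (k:ℝ) * h := by
        rw [hx₀def, hhdef]
        push_cast
        ring
      show ((a ε * ((i₀ + (k:ℤ) : ℤ) : ℝ) + b ε) * ε) ^ c
          * Real.exp (-((a ε * ((i₀ + (k:ℤ) : ℤ) : ℝ) + b ε) * ε) ^ 2 / 2) = _
      rw [hxk]
      rfl
    rw [hBIG, hR]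
    simp only
    rw [hsum_eq, hc2]
    -- now pure algebra
    set S : ℝ := ∑' k : ℕ, fc c (x₀ + (k:ℝ) * h) with hS
    set J : ℝ := ∫ x in Ioi t, fc c x with hJ
    set I : ℝ := t ^ (c-1) * Real.exp (-t^2/2) with hI
    have hIpos : 0 < I := mul_pos (Real.rpow_pos_of_pos ht0 _) (Real.exp_pos _)
    have hgoal_den : h⁻¹ * t ^ (c-1) * Real.exp (-t^2/2) = h⁻¹ * I := by
      rw [hI]; ring
    rw [hgoal_den]
    have hfrac : J / I = (h⁻¹ * J) / (h⁻¹ * I) :=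
      (mul_div_mul_left _ _ (inv_ne_zero hh.ne')).symm
    rw [hfrac, div_sub_div_same, abs_div,
      abs_of_pos (mul_pos (inv_pos.2 hh) hIpos)]
    have hbound : |S - h⁻¹ * J| / (h⁻¹ * I) ≤ fc c t / (h⁻¹ * I) := by
      gcongr
    refine le_trans hbound ?_
    have heq2 : fc c t / (h⁻¹ * I) = t * h := by
      rw [hI]
      unfold fc
      rw [show t ^ c = t ^ (c-1) * t by rw [← Real.rpow_add_one ht0.ne']; ring_nf]
      field_simp
    rw [heq2, htdef, hhdef]
    nlinarith [sq_nonneg ε]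
  have hzero : Tendsto (fun ε => BIG ε - R ε) (𝓝[>] (0:ℝ)) (𝓝 0) := by
    apply squeeze_zero_norm' _ hθa
    filter_upwards [key] with ε hε
    rwa [Real.norm_eq_abs]
  have hfinal := hzero.add hRt
  rw [zero_add] at hfinal
  have heq : (fun ε => BIG ε - R ε + R ε) = BIG := by funext ε; ring
  rw [heq] at hfinal
  exact hfinal
end

section
/- Fix α ∈ (0,2] and r ∈ ℝ. For ε ∈ (0,1) define A_ε := ε^{-1}(√(−2 ln ε) + (1/α − 1)·ln(−2 ln ε)/√(−2 ln ε)), B_ε := (ε√(−2 ln ε))^{-1}, and τ(ε) := A_ε + B_ε·r. Then lim_{ε → 0+} ε^{-1}·(ε τ(ε))^{2/α − 2}·exp(−(ε τ(ε))²/2) = exp(−r). -/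
open Filter Topology Real

/-- With `A_ε, B_ε` as in the paper and `τ(ε) := A_ε + B_ε r`,
`lim_{ε→0+} ε⁻¹ (ετ(ε))^{2/α−2} exp(−(ετ(ε))²/2) = exp(−r)`. -/
theorem stmt_7 (α : ℝ) (hα : α ∈ Set.Ioc (0:ℝ) 2) (r : ℝ) :
    Tendsto
      (fun ε : ℝ =>
        ε⁻¹ * (ε * ((ε⁻¹ * (Real.sqrt (-2 * Real.log ε)
              + (1 / α - 1) * Real.log (-2 * Real.log ε) / Real.sqrt (-2 * Real.log ε)))
            + (ε * Real.sqrt (-2 * Real.log ε))⁻¹ * r)) ^ (2 / α - 2)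
          * Real.exp (-(ε * ((ε⁻¹ * (Real.sqrt (-2 * Real.log ε)
              + (1 / α - 1) * Real.log (-2 * Real.log ε) / Real.sqrt (-2 * Real.log ε)))
            + (ε * Real.sqrt (-2 * Real.log ε))⁻¹ * r)) ^ 2 / 2))
      (𝓝[>] (0:ℝ)) (𝓝 (Real.exp (-r))) := by
  set c : ℝ := 1 / α - 1 with hc
  -- basic log asymptotics
  have hlog1 : Tendsto (fun t : ℝ => Real.log t / t) atTop (𝓝 0) := by
    simpa using Real.tendsto_pow_log_div_mul_add_atTop 1 0 1 one_ne_zero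
  have hlog2 : Tendsto (fun t : ℝ => (Real.log t) ^ 2 / t) atTop (𝓝 0) := by
    simpa using Real.tendsto_pow_log_div_mul_add_atTop 1 0 2 one_ne_zero
  have hinv : Tendsto (fun t : ℝ => t⁻¹) atTop (𝓝 (0:ℝ)) := tendsto_inv_atTop_zero
  have h1 : Tendsto (fun t : ℝ => (c * Real.log t + r) / t) atTop (𝓝 0) := by
    have h := (hlog1.const_mul c).add (hinv.const_mul r)
    rw [mul_zero, mul_zero, add_zero] at h
    refine h.congr (fun t => ?_)
    ring
  have h2 : Tendsto (fun t : ℝ => (c * Real.log t + r) ^ 2 / (2 * t)) atTop (𝓝 0) := by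
    have h := ((hlog2.const_mul (c ^ 2 / 2)).add (hlog1.const_mul (c * r))).add
      (hinv.const_mul (r ^ 2 / 2))
    rw [mul_zero, mul_zero, mul_zero, add_zero, add_zero] at h
    refine h.congr' ?_
    filter_upwards [eventually_gt_atTop (0:ℝ)] with t ht
    field_simp
    ring
  -- the model function H and its limit
  set H : ℝ → ℝ := fun t =>
    (1 + (c * Real.log t + r) / t) ^ (2 * c)
      * Real.exp (-((c * Real.log t + r) ^ 2 / (2 * t))) * Real.exp (-r) with hH
  have hHlim : Tendsto H atTop (𝓝 (Real.exp (-r))) := by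
    have hb : Tendsto (fun t : ℝ => 1 + (c * Real.log t + r) / t) atTop (𝓝 1) := by
      simpa using tendsto_const_nhds.add h1
    have hcont : ContinuousAt (fun y : ℝ => y ^ (2 * c)) 1 :=
      Real.continuousAt_rpow_const 1 (2 * c) (Or.inl one_ne_zero)
    have T1 : Tendsto (fun t : ℝ => (1 + (c * Real.log t + r) / t) ^ (2 * c)) atTop (𝓝 1) := by
      have := hcont.tendsto.comp hb
      simpa [Function.comp_def] using this
    have T2 : Tendsto (fun t : ℝ =>
        Real.exp (-((c * Real.log t + r) ^ 2 / (2 * t)))) atTop (𝓝 1) := by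
      have h2' : Tendsto (fun t : ℝ => -((c * Real.log t + r) ^ 2 / (2 * t))) atTop (𝓝 0) := by
        simpa using h2.neg
      simpa [Function.comp_def] using (Real.continuous_exp.tendsto 0).comp h2'
    have := (T1.mul T2).mul (tendsto_const_nhds (x := Real.exp (-r)))
    simpa using this
  -- -2 log ε → ∞
  have hL : Tendsto (fun ε : ℝ => -2 * Real.log ε) (𝓝[>] (0:ℝ)) atTop :=
    (tendsto_const_mul_atTop_of_neg (by norm_num : (-2:ℝ) < 0)).mpr
      Real.tendsto_log_nhdsGT_zero
  -- eventually conditions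
  have hSt : ∀ᶠ t : ℝ in atTop, 1 < t ∧ -1 < (c * Real.log t + r) / t :=
    (eventually_gt_atTop 1).and (h1.eventually (eventually_gt_nhds (by norm_num : (-1:ℝ) < 0)))
  have hev : ∀ᶠ ε in 𝓝[>] (0:ℝ),
      1 < -2 * Real.log ε ∧
        -1 < (c * Real.log (-2 * Real.log ε) + r) / (-2 * Real.log ε) := hL.eventually hSt
  refine (hHlim.comp hL).congr' ?_
  filter_upwards [hev, self_mem_nhdsWithin] with ε hevε (hε0 : 0 < ε)
  obtain ⟨ht1, htu⟩ := hevε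
  set t : ℝ := -2 * Real.log ε with htdef
  set u : ℝ := c * Real.log t + r with hu
  have ht0 : 0 < t := by linarith
  set s : ℝ := Real.sqrt t with hs
  have hs0 : 0 < s := Real.sqrt_pos.mpr ht0
  have hss : s ^ 2 = t := Real.sq_sqrt ht0.le
  have hεne : ε ≠ 0 := ne_of_gt hε0
  have hsne : s ≠ 0 := ne_of_gt hs0
  have htne : t ≠ 0 := ne_of_gt ht0
  have hbase : 0 < 1 + u / t := by linarith
  -- the inner expression
  have hx : ε * ((ε⁻¹ * (s + c * Real.log t / s)) + (ε * s)⁻¹ * r) = s * (1 + u / t) := by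
    rw [hu]
    field_simp
    rw [← hss]
    ring
  have hxpos : 0 < s * (1 + u / t) := mul_pos hs0 hbase
  have hαexp : 2 / α - 2 = 2 * c := by rw [hc]; ring
  -- rpow part
  have hrpow : (s * (1 + u / t)) ^ (2 / α - 2)
      = t ^ c * (1 + u / t) ^ (2 * c) := by
    rw [hαexp, Real.mul_rpow hs0.le hbase.le]
    congr 1
    rw [hs, Real.sqrt_eq_rpow, ← Real.rpow_mul ht0.le]
    congr 1
    ring
  -- exp part
  have hx2 : (s * (1 + u / t)) ^ 2 = t + 2 * u + u ^ 2 / t := by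
    have : (s * (1 + u / t)) ^ 2 = s ^ 2 * (1 + u / t) ^ 2 := by ring
    rw [this, hss]
    field_simp
    ring
  have hexpε : Real.exp (-(t / 2)) = ε := by
    rw [htdef]
    have : -(-2 * Real.log ε / 2) = Real.log ε := by ring
    rw [this, Real.exp_log hε0]
  have htc : Real.exp (-(c * Real.log t)) = t ^ (-c) := by
    rw [Real.rpow_def_of_pos ht0]
    ring_nf
  have hexp : Real.exp (-(s * (1 + u / t)) ^ 2 / 2)
      = ε * (t ^ (-c) * Real.exp (-r)) * Real.exp (-(u ^ 2 / (2 * t))) := by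
    rw [hx2, neg_div]
    have : -((t + 2 * u + u ^ 2 / t) / 2)
        = -(t / 2) + (-(c * Real.log t) + -r + -(u ^ 2 / (2 * t))) := by
      rw [hu]; field_simp; ring
    rw [this, Real.exp_add, Real.exp_add, Real.exp_add, hexpε, htc]
    ring
  -- put it together
  show H t = _
  have hcc : t ^ c * t ^ (-c) = 1 := by
    rw [← Real.rpow_add ht0]
    simp
  simp only [hH]
  rw [hx, hrpow, hexp, ← hu]
  rw [show ε⁻¹ * (t ^ c * (1 + u / t) ^ (2 * c))
        * (ε * (t ^ (-c) * Real.exp (-r)) * Real.exp (-(u ^ 2 / (2 * t))))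
      = (ε⁻¹ * ε) * (t ^ c * t ^ (-c))
        * ((1 + u / t) ^ (2 * c) * Real.exp (-(u ^ 2 / (2 * t))) * Real.exp (-r)) from by ring,
    hcc, inv_mul_cancel₀ hεne]
  ring
end

section
/- Fix α ∈ (0,2] and let R : (0,1) → ℝ satisfy R(ε) → +∞ and R(ε)/(−ln ε) → 0 as ε → 0+. For ε ∈ (0,1) define A_ε := ε^{-1}(√(−2 ln ε) + (1/α − 1)·ln(−2 ln ε)/√(−2 ln ε)), B_ε := (ε√(−2 ln ε))^{-1}, and σ(ε) := A_ε + B_ε·R(ε). Then lim_{ε → 0+} ε^{-1}·(ε σ(ε))^{2/α − 2}·exp(−(ε σ(ε))²/2) = 0. -/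
open Filter Topology Real

/-- With `A_ε, B_ε` as in the paper, `R(ε) → ∞`, `R(ε)/(−ln ε) → 0`, and
`σ(ε) := A_ε + B_ε R(ε)`, one has `lim_{ε→0+} ε⁻¹ (εσ(ε))^{2/α−2} exp(−(εσ(ε))²/2) = 0`. -/
theorem stmt_8 (α : ℝ) (hα : α ∈ Set.Ioc (0:ℝ) 2) (R : ℝ → ℝ)
    (hR : Tendsto R (𝓝[>] (0:ℝ)) atTop)
    (hR' : Tendsto (fun ε => R ε / (-Real.log ε)) (𝓝[>] (0:ℝ)) (𝓝 0)) :
    Tendsto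
      (fun ε : ℝ =>
        ε⁻¹ * (ε * ((ε⁻¹ * (Real.sqrt (-2 * Real.log ε)
              + (1 / α - 1) * Real.log (-2 * Real.log ε) / Real.sqrt (-2 * Real.log ε)))
            + (ε * Real.sqrt (-2 * Real.log ε))⁻¹ * R ε)) ^ (2 / α - 2)
          * Real.exp (-(ε * ((ε⁻¹ * (Real.sqrt (-2 * Real.log ε)
              + (1 / α - 1) * Real.log (-2 * Real.log ε) / Real.sqrt (-2 * Real.log ε)))
            + (ε * Real.sqrt (-2 * Real.log ε))⁻¹ * R ε)) ^ 2 / 2))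
      (𝓝[>] (0:ℝ)) (𝓝 0) := by
  obtain ⟨hα0, hα2⟩ := hα
  have hαne : α ≠ 0 := ne_of_gt hα0
  set c : ℝ := 1 / α - 1 with hc
  set L : ℝ → ℝ := fun ε => -Real.log ε with hLdef
  set t : ℝ → ℝ := fun ε => c * Real.log (2 * L ε) + R ε with htdef
  set v : ℝ → ℝ := fun ε => 1 + t ε / (2 * L ε) with hvdef
  have hL : Tendsto L (𝓝[>] (0:ℝ)) atTop := by
    have h := Real.tendsto_log_nhdsGT_zero
    exact tendsto_neg_atBot_atTop.comp h
  have h2L : Tendsto (fun ε => 2 * L ε) (𝓝[>] (0:ℝ)) atTop := by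
    exact hL.const_mul_atTop (by norm_num)
  have hlogdiv : Tendsto (fun x : ℝ => Real.log x / x) atTop (𝓝 0) := by
    simpa using Real.isLittleO_log_id_atTop.tendsto_div_nhds_zero
  have hT : Tendsto (fun ε => t ε / (2 * L ε)) (𝓝[>] (0:ℝ)) (𝓝 0) := by
    have h1 : Tendsto (fun ε => c * (Real.log (2 * L ε) / (2 * L ε))) (𝓝[>] (0:ℝ))
        (𝓝 (c * 0)) := (hlogdiv.comp h2L).const_mul c
    have h2 : Tendsto (fun ε => R ε / L ε / 2) (𝓝[>] (0:ℝ)) (𝓝 (0 / 2)) := hR'.div_const 2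
    have h3 := h1.add h2
    have heq : (fun ε => t ε / (2 * L ε)) =
        fun ε => c * (Real.log (2 * L ε) / (2 * L ε)) + R ε / L ε / 2 := by
      funext ε
      rw [htdef]
      simp only [div_div]
      ring
    rw [heq]
    simpa using h3
  have hv : Tendsto v (𝓝[>] (0:ℝ)) (𝓝 1) := by
    have := hT.const_add 1
    simpa using this
  have hvp : Tendsto (fun ε => v ε ^ (2 * c)) (𝓝[>] (0:ℝ)) (𝓝 1) := by
    have := hv.rpow_const (p := 2 * c) (Or.inl one_ne_zero)
    simpa using this
  have hexp : Tendsto (fun ε => Real.exp (-R ε)) (𝓝[>] (0:ℝ)) (𝓝 0) :=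
    Real.tendsto_exp_atBot.comp (tendsto_neg_atTop_atBot.comp hR)
  have hG : Tendsto (fun ε => v ε ^ (2 * c) * Real.exp (-R ε)) (𝓝[>] (0:ℝ)) (𝓝 0) := by
    simpa using hvp.mul hexp
  have hev : ∀ᶠ ε in 𝓝[>] (0:ℝ), 0 < ε ∧ 1 < L ε ∧ 1/2 < v ε := by
    filter_upwards [self_mem_nhdsWithin, hL.eventually_gt_atTop 1,
      hv.eventually (lt_mem_nhds (by norm_num : (1:ℝ)/2 < 1))] with ε h1 h2 h3
    exact ⟨h1, h2, h3⟩
  have hH : Tendsto (fun ε => v ε ^ (2 * c) * Real.exp (-R ε) *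
      Real.exp (-(t ε ^ 2) / (4 * L ε))) (𝓝[>] (0:ℝ)) (𝓝 0) := by
    refine squeeze_zero' ?_ ?_ hG
    · filter_upwards [hev] with ε ⟨hε, hL1, hv1⟩
      have h1 : (0:ℝ) ≤ v ε ^ (2 * c) := Real.rpow_nonneg ((by norm_num : (0:ℝ) < 1/2).trans hv1).le _
      exact mul_nonneg (mul_nonneg h1 (Real.exp_pos _).le) (Real.exp_pos _).le
    · filter_upwards [hev] with ε ⟨hε, hL1, hv1⟩
      have h1 : (0:ℝ) ≤ v ε ^ (2 * c) * Real.exp (-R ε) :=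
        mul_nonneg (Real.rpow_nonneg ((by norm_num : (0:ℝ) < 1/2).trans hv1).le _) (Real.exp_pos _).le
      have h2 : Real.exp (-(t ε ^ 2) / (4 * L ε)) ≤ 1 := by
        rw [Real.exp_le_one_iff]
        apply div_nonpos_of_nonpos_of_nonneg
        · nlinarith [sq_nonneg (t ε)]
        · linarith
      calc v ε ^ (2 * c) * Real.exp (-R ε) * Real.exp (-(t ε ^ 2) / (4 * L ε))
          ≤ v ε ^ (2 * c) * Real.exp (-R ε) * 1 := mul_le_mul_of_nonneg_left h2 h1
        _ = v ε ^ (2 * c) * Real.exp (-R ε) := by ring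
  refine hH.congr' ?_
  filter_upwards [hev] with ε ⟨hε, hL1, hv1⟩
  have hLpos : (0:ℝ) < L ε := by linarith
  have h2Lpos : (0:ℝ) < 2 * L ε := by linarith
  have hvpos : (0:ℝ) < v ε := (by norm_num : (0:ℝ) < 1/2).trans hv1
  have hrw : -2 * Real.log ε = 2 * L ε := by rw [hLdef]; ring
  rw [hrw]
  set s : ℝ := Real.sqrt (2 * L ε) with hsdef
  have hspos : (0:ℝ) < s := Real.sqrt_pos.2 h2Lpos
  have hs2 : s ^ 2 = 2 * L ε := Real.sq_sqrt h2Lpos.le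
  have hx : ε * ((ε⁻¹ * (s + c * Real.log (2 * L ε) / s)) + (ε * s)⁻¹ * R ε) = s * v ε := by
    rw [hvdef, htdef]
    simp only []
    rw [← hs2]
    field_simp
    ring
  rw [hx]
  have hrpowc : (0:ℝ) < (2 * L ε) ^ c := Real.rpow_pos_of_pos h2Lpos c
  have hseq : s ^ (2 * c) = (2 * L ε) ^ c := by
    rw [hsdef, Real.sqrt_eq_rpow, ← Real.rpow_mul h2Lpos.le,
      show (1:ℝ)/2 * (2 * c) = c by ring]
  have hrp : (s * v ε) ^ (2 / α - 2) = (2 * L ε) ^ c * v ε ^ (2 * c) := by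
    have h1 : (2:ℝ) / α - 2 = 2 * c := by rw [hc]; ring
    rw [h1, Real.mul_rpow hspos.le hvpos.le, hseq]
  have harg : -(s * v ε) ^ 2 / 2 =
      Real.log ε + Real.log (2 * L ε) * (-c) + (-R ε) + (-(t ε ^ 2) / (4 * L ε)) := by
    have hveq : v ε = 1 + t ε / (2 * L ε) := by rw [hvdef]
    have hteq : t ε = c * Real.log (2 * L ε) + R ε := by rw [htdef]
    have hlogε : Real.log ε = -L ε := by rw [hLdef]; ring
    rw [hlogε, hveq, hteq]
    have hmul : (s * (1 + (c * Real.log (2 * L ε) + R ε) / (2 * L ε))) ^ 2 =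
        s ^ 2 * (1 + (c * Real.log (2 * L ε) + R ε) / (2 * L ε)) ^ 2 := by ring
    rw [hmul, hs2]
    field_simp
    ring
  have hexpeq : Real.exp (-(s * v ε) ^ 2 / 2) =
      ε * (((2 * L ε) ^ c)⁻¹ * Real.exp (-R ε) * Real.exp (-(t ε ^ 2) / (4 * L ε))) := by
    rw [harg, Real.exp_add, Real.exp_add, Real.exp_add, Real.exp_log hε,
      show Real.exp (Real.log (2 * L ε) * (-c)) = ((2 * L ε) ^ c)⁻¹ by
        rw [← Real.rpow_def_of_pos h2Lpos (-c), Real.rpow_neg h2Lpos.le]]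
    ring
  rw [hrp, hexpeq]
  field_simp
end

section
/- Let ρ : ℝ → ℝ be a bounded function such that ρ(t)·ln t → 0 as t → +∞, and let s : (0,1) → (0, ∞) satisfy ln s(ε)/(−ln ε) → 1 as ε → 0+. Then (−ln ε) · sup_{t ≥ s(ε)} |ρ(t)| → 0 as ε → 0+. -/
open Filter Topology Real Set

/-- if `ρ` is bounded with `ρ(t) ln t → 0` as `t → +∞`, and
`ln s(ε)/(−ln ε) → 1` as `ε → 0+`, then `(−ln ε) · sup_{t ≥ s(ε)} |ρ(t)| → 0`. -/
theorem stmt_12 (ρ : ℝ → ℝ) (M : ℝ) (hbd : ∀ t, |ρ t| ≤ M)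
    (hρ : Tendsto (fun t => ρ t * Real.log t) atTop (𝓝 0))
    (s : ℝ → ℝ) (hs_pos : ∀ ε ∈ Set.Ioo (0:ℝ) 1, 0 < s ε)
    (hs : Tendsto (fun ε => Real.log (s ε) / (-Real.log ε)) (𝓝[>] (0:ℝ)) (𝓝 1)) :
    Tendsto (fun ε => (-Real.log ε) * sSup ((fun t => |ρ t|) '' Set.Ici (s ε)))
      (𝓝[>] (0:ℝ)) (𝓝 0) := by
  rw [Metric.tendsto_nhds]
  intro δ hδ
  -- choose T with |ρ t * log t| < δ/4 for t ≥ T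
  obtain ⟨T, hT⟩ := (Metric.tendsto_nhds.mp hρ (δ/4) (by linarith)).exists_forall_of_atTop
  -- a filter fact: -log ε → ∞
  have hneg : Tendsto (fun ε : ℝ => -Real.log ε) (𝓝[>] (0:ℝ)) atTop :=
    tendsto_neg_atBot_atTop.comp Real.tendsto_log_nhdsGT_zero
  have hε1 : ∀ᶠ ε in 𝓝[>] (0:ℝ), (0:ℝ) < ε := self_mem_nhdsWithin
  have hε2 : ∀ᶠ ε in 𝓝[>] (0:ℝ), ε < 1 :=
    (eventually_lt_nhds one_pos).filter_mono nhdsWithin_le_nhds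
  have hratio : ∀ᶠ ε in 𝓝[>] (0:ℝ), (1:ℝ)/2 < Real.log (s ε) / (-Real.log ε) :=
    hs.eventually (lt_mem_nhds (by norm_num))
  have hL : ∀ᶠ ε in 𝓝[>] (0:ℝ), 2 * max (Real.log (max T 1)) 1 < -Real.log ε :=
    hneg.eventually_gt_atTop _
  filter_upwards [hε1, hε2, hratio, hL] with ε hε1 hε2 hratio hL
  set L := -Real.log ε with hLdef
  set S := Real.log (s ε) with hSdef
  have hsε : 0 < s ε := hs_pos ε ⟨hε1, hε2⟩
  have hLpos : 0 < L := lt_of_le_of_lt (by positivity) hL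
  have hSL : L / 2 < S := by
    have := hratio
    rw [lt_div_iff₀ hLpos] at this
    linarith
  have hSgt : max (Real.log (max T 1)) 1 < S := by
    have : max (Real.log (max T 1)) 1 < L / 2 := by linarith
    linarith
  have hSpos : 0 < S := lt_trans one_pos (lt_of_le_of_lt (le_max_right _ _) hSgt)
  have hT1 : (1:ℝ) ≤ max T 1 := le_max_right _ _
  have hsT : max T 1 < s ε := by
    have hlog : Real.log (max T 1) < S := lt_of_le_of_lt (le_max_left _ _) hSgt
    have := (Real.log_lt_log_iff (by linarith : (0:ℝ) < max T 1) hsε).mp hlog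
    exact this
  -- bound each element of the image
  set A := (fun t => |ρ t|) '' Set.Ici (s ε) with hA
  have hAne : A.Nonempty := ⟨|ρ (s ε)|, ⟨s ε, Set.self_mem_Ici, rfl⟩⟩
  have hAbd : ∀ y ∈ A, y ≤ δ / 4 / S := by
    rintro y ⟨t, ht, rfl⟩
    have hts : s ε ≤ t := ht
    have hlt : Real.log t ≥ S := Real.log_le_log hsε hts
    have htT : T ≤ t := le_trans (le_trans (le_max_left _ _) hsT.le) hts
    have hb := hT t htT
    rw [Real.dist_eq, sub_zero, abs_mul, abs_of_pos (lt_of_lt_of_le hSpos hlt)] at hb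
    have h1 : |ρ t| * S ≤ |ρ t| * Real.log t :=
      mul_le_mul_of_nonneg_left hlt (abs_nonneg _)
    rw [le_div_iff₀ hSpos]
    linarith
  have hsup : sSup A ≤ δ / 4 / S := csSup_le hAne hAbd
  have hsup0 : 0 ≤ sSup A := by
    have hMA : BddAbove A := ⟨δ / 4 / S, hAbd⟩
    exact le_trans (abs_nonneg _) (le_csSup hMA ⟨s ε, Set.self_mem_Ici, rfl⟩)
  have hfin : L * sSup A ≤ L * (δ / 4 / S) := mul_le_mul_of_nonneg_left hsup hLpos.le
  have hlast : L * (δ / 4 / S) < δ := by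
    rw [div_div, ← mul_div_assoc, div_lt_iff₀ (by positivity)]
    nlinarith
  rw [Real.dist_eq, sub_zero, abs_of_nonneg (by positivity)]
  exact lt_of_le_of_lt hfin hlast
end

section
/- Let (X_i)_{i ∈ ℤ} be a stationary sequence of real random variables, let m, n be integers with m + 1 ≤ n − 1, and let (c_i)_{i ∈ ℤ} be a nondecreasing sequence of real numbers. Then P(⋃_{i=m}^{n} {X_i ≥ c_i}) ≤ 2·P(X_m ≥ c_m) + P(⋃_{i=m+1}^{n−1} {X_i ≥ c_{i+1}}). -/
open MeasureTheory Filter Set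

lemma shift_aux (Ω : Type) (mΩ : MeasurableSpace Ω) (P : Measure Ω)
    (X : ℤ → Ω → ℝ) (hXmeas : ∀ i, Measurable (X i))
    (hstat : ∀ (k : ℤ) (p : ℕ) (idx : Fin p → ℤ),
      Measure.map (fun ω => fun j => X (idx j + k) ω) P
        = Measure.map (fun ω => fun j => X (idx j) ω) P)
    (c : ℤ → ℝ) (a b : ℤ) (hab : a ≤ b) :
    P (⋃ i ∈ Set.Icc a b, {ω | c (i + 1) ≤ X (i + 1) ω})
      = P (⋃ i ∈ Set.Icc a b, {ω | c (i + 1) ≤ X i ω}) := by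
  set p : ℕ := (b - a + 1).toNat with hp
  set idx : Fin p → ℤ := fun j => a + (j : ℤ) with hidx
  have hcorr : ∀ i : ℤ, i ∈ Set.Icc a b ↔ ∃ j : Fin p, idx j = i := by
    intro i
    constructor
    · rintro ⟨h1, h2⟩
      refine ⟨⟨(i - a).toNat, by omega⟩, ?_⟩
      simp only [hidx]
      omega
    · rintro ⟨j, rfl⟩
      have := j.isLt
      simp only [hidx, Set.mem_Icc]
      omega
  set S : Set (Fin p → ℝ) :=
    ⋃ j : Fin p, (fun f : Fin p → ℝ => f j) ⁻¹' Set.Ici (c (idx j + 1)) with hS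
  have hSmeas : MeasurableSet S :=
    MeasurableSet.iUnion fun j => (measurable_pi_apply j) measurableSet_Ici
  have hf : Measurable (fun ω => fun j : Fin p => X (idx j + 1) ω) :=
    measurable_pi_lambda _ fun j => hXmeas _
  have hg : Measurable (fun ω => fun j : Fin p => X (idx j) ω) :=
    measurable_pi_lambda _ fun j => hXmeas _
  have h1 : (⋃ i ∈ Set.Icc a b, {ω | c (i + 1) ≤ X (i + 1) ω})
      = (fun ω => fun j : Fin p => X (idx j + 1) ω) ⁻¹' S := by
    ext ω
    simp only [Set.mem_iUnion, Set.mem_preimage, hS, Set.mem_Ici, Set.mem_setOf_eq]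
    constructor
    · rintro ⟨i, hi, hx⟩
      obtain ⟨j, rfl⟩ := (hcorr i).1 hi
      exact ⟨j, hx⟩
    · rintro ⟨j, hx⟩
      exact ⟨idx j, (hcorr (idx j)).2 ⟨j, rfl⟩, hx⟩
  have h2 : (⋃ i ∈ Set.Icc a b, {ω | c (i + 1) ≤ X i ω})
      = (fun ω => fun j : Fin p => X (idx j) ω) ⁻¹' S := by
    ext ω
    simp only [Set.mem_iUnion, Set.mem_preimage, hS, Set.mem_Ici, Set.mem_setOf_eq]
    constructor
    · rintro ⟨i, hi, hx⟩
      obtain ⟨j, rfl⟩ := (hcorr i).1 hi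
      exact ⟨j, hx⟩
    · rintro ⟨j, hx⟩
      exact ⟨idx j, (hcorr (idx j)).2 ⟨j, rfl⟩, hx⟩
  rw [h1, h2, ← Measure.map_apply hf hSmeas, ← Measure.map_apply hg hSmeas,
    hstat 1 p idx]

/-- for a stationary sequence `(X_i)_{i ∈ ℤ}` and a nondecreasing sequence
of levels `(c_i)`, with integers `m + 1 ≤ n − 1`,
`P(⋃_{i=m}^{n} {X_i ≥ c_i}) ≤ 2 P(X_m ≥ c_m) + P(⋃_{i=m+1}^{n−1} {X_i ≥ c_{i+1}})`. -/
theorem stmt_13 (Ω : Type) (mΩ : MeasurableSpace Ω) (P : Measure Ω)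
    (hP : IsProbabilityMeasure P) (X : ℤ → Ω → ℝ) (hXmeas : ∀ i, Measurable (X i))
    (hstat : ∀ (k : ℤ) (p : ℕ) (idx : Fin p → ℤ),
      Measure.map (fun ω => fun j => X (idx j + k) ω) P
        = Measure.map (fun ω => fun j => X (idx j) ω) P)
    (c : ℤ → ℝ) (hc : Monotone c) (m n : ℤ) (hmn : m + 1 ≤ n - 1) :
    P (⋃ i ∈ Set.Icc m n, {ω | c i ≤ X i ω})
      ≤ 2 * P {ω | c m ≤ X m ω}
        + P (⋃ i ∈ Set.Icc (m + 1) (n - 1), {ω | c (i + 1) ≤ X i ω}) := by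
  have hA : (⋃ i ∈ Set.Icc m n, {ω | c i ≤ X i ω})
      ⊆ {ω | c m ≤ X m ω} ∪ ⋃ i ∈ Set.Icc (m + 1) n, {ω | c i ≤ X i ω} := by
    intro ω hω
    simp only [Set.mem_iUnion, Set.mem_Icc, Set.mem_setOf_eq, Set.mem_union] at hω ⊢
    obtain ⟨i, ⟨h1, h2⟩, hx⟩ := hω
    rcases eq_or_lt_of_le h1 with rfl | h
    · exact Or.inl hx
    · exact Or.inr ⟨i, ⟨by omega, h2⟩, hx⟩
  have hB : (⋃ i ∈ Set.Icc (m + 1) n, {ω | c i ≤ X i ω})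
      = ⋃ i ∈ Set.Icc m (n - 1), {ω | c (i + 1) ≤ X (i + 1) ω} := by
    ext ω
    simp only [Set.mem_iUnion, Set.mem_Icc, Set.mem_setOf_eq]
    constructor
    · rintro ⟨i, ⟨h1, h2⟩, hx⟩
      refine ⟨i - 1, ⟨by omega, by omega⟩, ?_⟩
      simpa using hx
    · rintro ⟨i, ⟨h1, h2⟩, hx⟩
      exact ⟨i + 1, ⟨by omega, by omega⟩, hx⟩
  have hshift := shift_aux Ω mΩ P X hXmeas hstat c m (n - 1) (by omega)
  have hB' : (⋃ i ∈ Set.Icc m (n - 1), {ω | c (i + 1) ≤ X i ω})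
      ⊆ {ω | c m ≤ X m ω} ∪ ⋃ i ∈ Set.Icc (m + 1) (n - 1), {ω | c (i + 1) ≤ X i ω} := by
    intro ω hω
    simp only [Set.mem_iUnion, Set.mem_Icc, Set.mem_setOf_eq, Set.mem_union] at hω ⊢
    obtain ⟨i, ⟨h1, h2⟩, hx⟩ := hω
    rcases eq_or_lt_of_le h1 with rfl | h
    · exact Or.inl (le_trans (hc (by omega : m ≤ m + 1)) hx)
    · exact Or.inr ⟨i, ⟨by omega, h2⟩, hx⟩
  calc P (⋃ i ∈ Set.Icc m n, {ω | c i ≤ X i ω})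
      ≤ P ({ω | c m ≤ X m ω} ∪ ⋃ i ∈ Set.Icc (m + 1) n, {ω | c i ≤ X i ω}) :=
        measure_mono hA
    _ ≤ P {ω | c m ≤ X m ω} + P (⋃ i ∈ Set.Icc (m + 1) n, {ω | c i ≤ X i ω}) :=
        measure_union_le _ _
    _ = P {ω | c m ≤ X m ω} + P (⋃ i ∈ Set.Icc m (n - 1), {ω | c (i + 1) ≤ X i ω}) := by
        rw [hB, hshift]
    _ ≤ P {ω | c m ≤ X m ω} + (P {ω | c m ≤ X m ω}
          + P (⋃ i ∈ Set.Icc (m + 1) (n - 1), {ω | c (i + 1) ≤ X i ω})) := by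
        gcongr
        exact le_trans (measure_mono hB') (measure_union_le _ _)
    _ = 2 * P {ω | c m ≤ X m ω}
          + P (⋃ i ∈ Set.Icc (m + 1) (n - 1), {ω | c (i + 1) ≤ X i ω}) := by
        rw [two_mul, add_assoc]
end
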